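/- For every 𝔉-stopping time σ, the families of random variables {𝔼(Σ_{i=1}^n Y(τ_i) | 𝓕_σ) : τ ∈ 𝒮^n_σ(δ,𝔉)} and {𝔼(Σ_{i=1}^n Y(τ_i) | 𝓕_σ) : τ ∈ 𝒮^n_σ(δ,𝔉)_disc} are directed upwards: for any two members a, b of the family there exists a member c with max{a, b} ≤ c a.s. -/

import Mathlib

open MeasureTheory Set Filter
open scoped ENNReal NNReal

noncomputable section

variable {Ω : Type*}

/-- `𝒢^ρ`: the smallest filtration making the `[0,∞]`-valued map `ρ` a stopping time,
`𝒢^ρ_t = σ({ρ ≤ s} : s ≤ t)`. -/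
def genFilt (ρ : Ω → ℝ≥0∞) (t : ℝ≥0) : MeasurableSpace Ω :=
  MeasurableSpace.generateFrom {A | ∃ s : ℝ≥0, s ≤ t ∧ A = {ω | ρ ω ≤ (s : ℝ≥0∞)}}

/-- `𝔄^ρ`: the smallest right-continuous filtration containing `𝔄` for which `ρ` is a
stopping time, i.e. the right-continuous regularization of `t ↦ σ(𝒜_t, 𝒢^ρ_t)`. -/
def rcEnlarge (𝔄 : ℝ≥0 → MeasurableSpace Ω) (ρ : Ω → ℝ≥0∞) (t : ℝ≥0) :
    MeasurableSpace Ω :=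
  ⨅ s ∈ Set.Ioi t, (𝔄 s ⊔ genFilt ρ s)

/-- Iterated enlargement `𝔄^{ρ₀,…,ρ_{i-1}}`. -/
def enrichedFilt (𝔄 : ℝ≥0 → MeasurableSpace Ω) (ρ : ℕ → Ω → ℝ≥0∞) :
    ℕ → ℝ≥0 → MeasurableSpace Ω
  | 0 => 𝔄
  | i + 1 => rcEnlarge (enrichedFilt 𝔄 ρ i) (ρ i)

/-- `ρ : Ω → [0,∞]` is a stopping time with respect to the filtration `𝔄 = (𝒜_t)_{t ≥ 0}`. -/
def IsStoppingTimeE (𝔄 : ℝ≥0 → MeasurableSpace Ω) (ρ : Ω → ℝ≥0∞) : Prop :=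
  ∀ t : ℝ≥0, MeasurableSet[𝔄 t] {ω | ρ ω ≤ (t : ℝ≥0∞)}

/-- The σ-algebra `𝒜_ρ` of events prior to the random time `ρ`. -/
def sigmaAt (𝔄 : ℝ≥0 → MeasurableSpace Ω) (ρ : Ω → ℝ≥0∞) : MeasurableSpace Ω :=
  MeasurableSpace.generateFrom
    {A | ∀ t : ℝ≥0, MeasurableSet[𝔄 t] (A ∩ {ω | ρ ω ≤ (t : ℝ≥0∞)})}

/-- Evaluation `Y(τ)` of a process at a `[0,∞]`-valued random time, with the convention
`Y(∞) := limsup_{t→∞} Y(t)`. -/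
def evalAt (Y : ℝ≥0 → Ω → ℝ) (τ : Ω → ℝ≥0∞) (ω : Ω) : ℝ :=
  if τ ω ≠ ∞ then Y (τ ω).toNNReal ω
  else limsup (fun t : ℝ≥0 => Y t ω) atTop

/-- Right-continuity of a filtration. -/
def RightContinuousFilt (𝔄 : ℝ≥0 → MeasurableSpace Ω) : Prop :=
  ∀ t : ℝ≥0, 𝔄 t = ⨅ s ∈ Set.Ioi t, 𝔄 s

variable {m0 : MeasurableSpace Ω}

/-- `Z` is (a version of) the essential supremum of the family of random variables `F`. -/
def IsEssSupFam (μ : Measure Ω) (F : Set (Ω → ℝ)) (Z : Ω → ℝ) : Prop :=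
  (∀ f ∈ F, f ≤ᵐ[μ] Z) ∧ ∀ g : Ω → ℝ, (∀ f ∈ F, f ≤ᵐ[μ] g) → Z ≤ᵐ[μ] g

/-- The set of strategies `𝒮^n_σ(δ, 𝔄)` (0-indexed: `τ 0` is the first exercise `τ₁`,
`δ 0` is the first waiting time `δ₁`). -/
def IsStrategy (𝔄 : ℝ≥0 → MeasurableSpace Ω) (δ : ℕ → Ω → ℝ≥0∞) (n : ℕ)
    (σ : Ω → ℝ≥0∞) (τ : ℕ → Ω → ℝ≥0∞) : Prop :=
  IsStoppingTimeE 𝔄 (τ 0) ∧ (∀ ω, σ ω ≤ τ 0 ω) ∧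
    ∀ i : ℕ, i + 1 < n →
      IsStoppingTimeE (enrichedFilt 𝔄 (fun j ω => τ j ω + δ j ω) (i + 1)) (τ (i + 1)) ∧
      ∀ ω, τ i ω + δ i ω ≤ τ (i + 1) ω

/-- `Σ_{i=1}^n Y(τ_i)`. -/
def rewardSum (Y : ℝ≥0 → Ω → ℝ) (n : ℕ) (τ : ℕ → Ω → ℝ≥0∞) (ω : Ω) : ℝ :=
  ∑ i ∈ Finset.range n, evalAt Y (τ i) ω

/-- The family of random variables whose essential supremum is `Z_n^{δ,𝔄}(σ)`. -/
def gainFam (μ : Measure Ω) (Y : ℝ≥0 → Ω → ℝ) (𝔄 : ℝ≥0 → MeasurableSpace Ω)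
    (δ : ℕ → Ω → ℝ≥0∞) (n : ℕ) (σ : Ω → ℝ≥0∞) : Set (Ω → ℝ) :=
  {g | ∃ τ : ℕ → Ω → ℝ≥0∞, IsStrategy 𝔄 δ n σ τ ∧
    g = μ[rewardSum Y n τ | sigmaAt 𝔄 σ]}

/-- The family of random variables whose essential supremum is `Z_n^{δ,𝔄}(σ)_disc`. -/
def gainFamDisc (μ : Measure Ω) (Y : ℝ≥0 → Ω → ℝ) (𝔄 : ℝ≥0 → MeasurableSpace Ω)
    (δ : ℕ → Ω → ℝ≥0∞) (n : ℕ) (σ : Ω → ℝ≥0∞) : Set (Ω → ℝ) :=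
  {g | ∃ τ : ℕ → Ω → ℝ≥0∞, IsStrategy 𝔄 δ n σ τ ∧ (Set.range (τ 0)).Countable ∧
    g = μ[rewardSum Y n τ | sigmaAt 𝔄 σ]}

/-- The hitting time `ρ_τ^B = inf{t > τ : X(t) ∈ B}` of `B` strictly after the random time `τ`. -/
def hitAfterE (X : ℝ≥0 → Ω → ℝ) (B : Set ℝ) (τ : Ω → ℝ≥0∞) (ω : Ω) : ℝ≥0∞ :=
  ⨅ u ∈ {u : ℝ≥0 | τ ω < (u : ℝ≥0∞) ∧ X u ω ∈ B}, (u : ℝ≥0∞)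

/-- The set of strategies `𝒮^n_σ(B)` of the second model. -/
def IsStrategyB (𝔉 : ℝ≥0 → MeasurableSpace Ω) (X : ℝ≥0 → Ω → ℝ) (B : ℕ → Set ℝ)
    (n : ℕ) (σ : Ω → ℝ≥0∞) (τ : ℕ → Ω → ℝ≥0∞) : Prop :=
  (∀ i < n, IsStoppingTimeE 𝔉 (τ i)) ∧ (∀ ω, σ ω ≤ τ 0 ω) ∧
    ∀ i : ℕ, i + 1 < n → ∀ ω, hitAfterE X (B i) (τ i) ω ≤ τ (i + 1) ω

/-- The family of random variables whose essential supremum is `Z_n^B(σ)` (second model). -/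
def gainFamB (μ : Measure Ω) (Y : ℝ≥0 → Ω → ℝ) (𝔉 : ℝ≥0 → MeasurableSpace Ω)
    (X : ℝ≥0 → Ω → ℝ) (B : ℕ → Set ℝ) (n : ℕ) (σ : Ω → ℝ≥0∞) : Set (Ω → ℝ) :=
  {g | ∃ τ : ℕ → Ω → ℝ≥0∞, IsStrategyB 𝔉 X B n σ τ ∧
    g = μ[rewardSum Y n τ | sigmaAt 𝔉 σ]}


/-!
Given strategies `τ, τ'` with gains `a, b` at `σ`, the event `A = {a ≤ b}` lies in `𝓕_σ`, and the
strategy that follows `τ'` on `A` and `τ` off `A` has gain `max a b`, because conditional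
expectation commutes with multiplication by `𝟙_A`. The substance is that the pasted tuple is again
a strategy: the enlarged filtrations `𝔉^{ρ₁+δ₁,…}` seen from inside `A` (resp. `Aᶜ`) depend only
on the values of the `ρ_j` on `A` (resp. `Aᶜ`), which comes down to the fact that a trace
σ-algebra commutes with the right limit `⨅_{s>t}` of a monotone family of σ-algebras. Pasting
does not enlarge the range of the first time, which handles the discrete family.
-/

section Filtrations

variable {α : Type*}

lemma Monotone.iInf_Ioi_eq_iInf_nat {β : Type*} [CompleteLattice β] {m : ℝ≥0 → β}
    (hm : Monotone m) (t : ℝ≥0) : ⨅ u ∈ Ioi t, m u = ⨅ k : ℕ, m (t + 1 / (k + 1)) := by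
  refine le_antisymm (le_iInf fun k => iInf₂_le _ (lt_add_of_pos_right t (by positivity)))
    (le_iInf₂ fun u hu => ?_)
  obtain ⟨k, hk⟩ := exists_nat_one_div_lt (tsub_pos_of_lt (mem_Ioi.mp hu))
  exact (iInf_le _ k).trans (hm (lt_tsub_iff_left.mp hk).le)

lemma iInf_comap_le_comap_iInf_of_antitone (f : α → Ω) {m : ℕ → MeasurableSpace Ω}
    (hm : Antitone m) : ⨅ k, (m k).comap f ≤ (⨅ k, m k).comap f := by
  intro s hs
  choose s' hs' hpre using fun k => (MeasurableSpace.measurableSet_iInf.mp hs k)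
  -- `liminf s'` has preimage `s`, and by antitonicity it is `m k`-measurable for every `k`.
  set T : ℕ → Set Ω := fun j => ⋂ k, s' (j + k)
  have hT : Monotone T := monotone_nat_of_le_succ fun j =>
    iInter_mono' fun k => ⟨k + 1, by rw [add_right_comm]; exact subset_rfl⟩
  refine ⟨⋃ j, T j, MeasurableSpace.measurableSet_iInf.mpr fun k => ?_, ?_⟩
  · rw [← hT.iUnion_nat_add k]
    exact .iUnion fun j => .iInter fun i => hm (by omega) _ (hs' (j + k + i))
  · simp only [T, preimage_iUnion, preimage_iInter, hpre, iInter_const, iUnion_const]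

lemma iInf_Ioi_comap_le_comap_iInf_Ioi (f : α → Ω) {m : ℝ≥0 → MeasurableSpace Ω}
    (hm : Monotone m) (t : ℝ≥0) :
    ⨅ u ∈ Ioi t, (m u).comap f ≤ (⨅ u ∈ Ioi t, m u).comap f := by
  have hanti : Antitone fun k : ℕ => m (t + 1 / (k + 1)) := fun _ _ _ => hm (by gcongr)
  rw [hm.iInf_Ioi_eq_iInf_nat,
    Monotone.iInf_Ioi_eq_iInf_nat fun _ _ h => MeasurableSpace.comap_mono (hm h)]
  exact iInf_comap_le_comap_iInf_of_antitone f hanti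

lemma comap_genFilt (f : α → Ω) (ρ : Ω → ℝ≥0∞) (t : ℝ≥0) :
    (genFilt ρ t).comap f = genFilt (ρ ∘ f) t := by
  simp only [genFilt, MeasurableSpace.comap_generateFrom]
  congr 1
  ext B
  constructor
  · rintro ⟨_, ⟨s, hs, rfl⟩, rfl⟩
    exact ⟨s, hs, rfl⟩
  · rintro ⟨s, hs, rfl⟩
    exact ⟨_, ⟨s, hs, rfl⟩, rfl⟩

lemma genFilt_mono (ρ : Ω → ℝ≥0∞) : Monotone (genFilt ρ) := fun _ _ hst =>
  MeasurableSpace.generateFrom_mono fun _ ⟨s, hs, hA⟩ => ⟨s, hs.trans hst, hA⟩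

lemma rcEnlarge_mono (𝔄 : ℝ≥0 → MeasurableSpace Ω) (ρ : Ω → ℝ≥0∞) :
    Monotone (rcEnlarge 𝔄 ρ) := fun _ _ hst =>
  le_iInf₂ fun u hu => iInf₂_le u (hst.trans_lt hu)

lemma le_rcEnlarge {𝔄 : ℝ≥0 → MeasurableSpace Ω} (h𝔄 : Monotone 𝔄) (ρ : Ω → ℝ≥0∞) (t : ℝ≥0) :
    𝔄 t ≤ rcEnlarge 𝔄 ρ t :=
  le_iInf₂ fun _ hu => (h𝔄 (le_of_lt hu)).trans le_sup_left

lemma enrichedFilt_mono {𝔄 : ℝ≥0 → MeasurableSpace Ω} (h𝔄 : Monotone 𝔄) (ρ : ℕ → Ω → ℝ≥0∞) :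
    ∀ k, Monotone (enrichedFilt 𝔄 ρ k)
  | 0 => h𝔄
  | _ + 1 => rcEnlarge_mono _ _

lemma le_enrichedFilt {𝔄 : ℝ≥0 → MeasurableSpace Ω} (h𝔄 : Monotone 𝔄) (ρ : ℕ → Ω → ℝ≥0∞)
    (k : ℕ) (t : ℝ≥0) : 𝔄 t ≤ enrichedFilt 𝔄 ρ k t := by
  induction k with
  | zero => exact le_rfl
  | succ k ih => exact ih.trans (le_rcEnlarge (enrichedFilt_mono h𝔄 ρ k) _ t)

lemma comap_rcEnlarge_le (f : α → Ω) {𝔄₁ 𝔄₂ : ℝ≥0 → MeasurableSpace Ω} (h𝔄₂ : Monotone 𝔄₂)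
    (h𝔄 : ∀ t, (𝔄₁ t).comap f ≤ (𝔄₂ t).comap f) {ρ₁ ρ₂ : Ω → ℝ≥0∞} (hρ : ρ₁ ∘ f = ρ₂ ∘ f)
    (t : ℝ≥0) : (rcEnlarge 𝔄₁ ρ₁ t).comap f ≤ (rcEnlarge 𝔄₂ ρ₂ t).comap f :=
  calc (rcEnlarge 𝔄₁ ρ₁ t).comap f
      ≤ ⨅ u ∈ Ioi t, (𝔄₁ u ⊔ genFilt ρ₁ u).comap f :=
        le_iInf₂ fun u hu => MeasurableSpace.comap_mono (iInf₂_le u hu)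
    _ ≤ ⨅ u ∈ Ioi t, (𝔄₂ u ⊔ genFilt ρ₂ u).comap f := iInf₂_mono fun u _ => by
        simp only [MeasurableSpace.comap_sup, comap_genFilt, hρ]
        exact sup_le_sup_right (h𝔄 u) _
    _ ≤ (rcEnlarge 𝔄₂ ρ₂ t).comap f :=
        iInf_Ioi_comap_le_comap_iInf_Ioi f (fun _ _ h => sup_le_sup (h𝔄₂ h) (genFilt_mono ρ₂ h)) t

lemma comap_enrichedFilt_le (f : α → Ω) {𝔄 : ℝ≥0 → MeasurableSpace Ω} (h𝔄 : Monotone 𝔄)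
    {ρ₁ ρ₂ : ℕ → Ω → ℝ≥0∞} (hρ : ∀ j, ρ₁ j ∘ f = ρ₂ j ∘ f) (k : ℕ) (t : ℝ≥0) :
    (enrichedFilt 𝔄 ρ₁ k t).comap f ≤ (enrichedFilt 𝔄 ρ₂ k t).comap f := by
  induction k generalizing t with
  | zero => exact le_rfl
  | succ k ih => exact comap_rcEnlarge_le f (enrichedFilt_mono h𝔄 ρ₂ k) ih (hρ k) t

end Filtrations

section Strategies

variable {𝔉 : ℝ≥0 → MeasurableSpace Ω} {σ : Ω → ℝ≥0∞}

lemma measurableSet_inter_le_of_sigmaAt (hσ : IsStoppingTimeE 𝔉 σ) {A : Set Ω}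
    (hA : MeasurableSet[sigmaAt 𝔉 σ] A) (t : ℝ≥0) :
    MeasurableSet[𝔉 t] (A ∩ {ω | σ ω ≤ t}) := by
  induction A, hA using MeasurableSpace.generateFrom_induction with
  | hC B hB => exact hB t
  | empty => simp
  | compl B _ ih =>
    have hdiff : Bᶜ ∩ {ω | σ ω ≤ t} = {ω | σ ω ≤ t} \ (B ∩ {ω | σ ω ≤ t}) := by
      rw [sdiff_inter_self_eq_sdiff, sdiff_eq, inter_comm]
    rw [hdiff]
    exact (hσ t).diff ih
  | iUnion B _ ih =>
    rw [iUnion_inter]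
    exact .iUnion ih

lemma isStoppingTimeE_piecewise {ρ₁ ρ₂ : Ω → ℝ≥0∞} (hσ₁ : σ ≤ ρ₁) (hσ₂ : σ ≤ ρ₂) {A : Set Ω}
    [DecidablePred (· ∈ A)]
    (hA : ∀ t, MeasurableSet[𝔉 t] (A ∩ {ω | σ ω ≤ t}))
    (hAc : ∀ t, MeasurableSet[𝔉 t] (Aᶜ ∩ {ω | σ ω ≤ t}))
    (h₁ : ∀ t : ℝ≥0, MeasurableSet[(𝔉 t).comap ((↑) : A → Ω)] {ω : A | ρ₁ ω ≤ t})
    (h₂ : ∀ t : ℝ≥0, MeasurableSet[(𝔉 t).comap ((↑) : ↥Aᶜ → Ω)] {ω : ↥Aᶜ | ρ₂ ω ≤ t}) :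
    IsStoppingTimeE 𝔉 (A.piecewise ρ₁ ρ₂) := by
  intro t
  obtain ⟨C₁, hC₁, hpre₁⟩ := h₁ t
  obtain ⟨C₂, hC₂, hpre₂⟩ := h₂ t
  have hset : {ω | A.piecewise ρ₁ ρ₂ ω ≤ t} =
      (A ∩ {ω | σ ω ≤ t}) ∩ C₁ ∪ (Aᶜ ∩ {ω | σ ω ≤ t}) ∩ C₂ := by
    ext ω
    by_cases hω : ω ∈ A
    · have hC : ω ∈ C₁ ↔ ρ₁ ω ≤ t := Set.ext_iff.mp hpre₁ ⟨ω, hω⟩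
      simp only [mem_ofPred_eq, piecewise_eq_of_mem _ _ _ hω, mem_union, mem_inter_iff, hω,
        mem_compl_iff, not_true_eq_false, false_and, or_false, true_and, hC]
      exact ⟨fun h => ⟨(hσ₁ ω).trans h, h⟩, And.right⟩
    · have hC : ω ∈ C₂ ↔ ρ₂ ω ≤ t := Set.ext_iff.mp hpre₂ ⟨ω, hω⟩
      simp only [mem_ofPred_eq, piecewise_eq_of_notMem _ _ _ hω, mem_union, mem_inter_iff, hω,
        mem_compl_iff, not_false_eq_true, false_and, false_or, true_and, hC]
      exact ⟨fun h => ⟨(hσ₂ ω).trans h, h⟩, And.right⟩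
  rw [hset]
  exact ((hA t).inter hC₁).union ((hAc t).inter hC₂)

variable {δ : ℕ → Ω → ℝ≥0∞} {n : ℕ} {τ τ' : ℕ → Ω → ℝ≥0∞}

lemma IsStrategy.le (hτ : IsStrategy 𝔉 δ n σ τ) {i : ℕ} (hi : i < n) : σ ≤ τ i := by
  induction i with
  | zero => exact hτ.2.1
  | succ i ih => exact fun ω => (ih (by omega) ω).trans (le_self_add.trans ((hτ.2.2 i hi).2 ω))

lemma IsStrategy.piecewise (hmono : Monotone 𝔉) (hσ : IsStoppingTimeE 𝔉 σ)
    (hτ : IsStrategy 𝔉 δ n σ τ) (hτ' : IsStrategy 𝔉 δ n σ τ') {A : Set Ω}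
    [DecidablePred (· ∈ A)] (hA : MeasurableSet[sigmaAt 𝔉 σ] A) :
    IsStrategy 𝔉 δ n σ (fun i => A.piecewise (τ' i) (τ i)) := by
  set ρ := fun i => A.piecewise (τ' i) (τ i)
  have hA' : ∀ k t, MeasurableSet[enrichedFilt 𝔉 (fun j ω => ρ j ω + δ j ω) k t]
      (A ∩ {ω | σ ω ≤ t}) := fun k t =>
    le_enrichedFilt hmono _ k t _ (measurableSet_inter_le_of_sigmaAt hσ hA t)
  have hAc' : ∀ k t, MeasurableSet[enrichedFilt 𝔉 (fun j ω => ρ j ω + δ j ω) k t]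
      (Aᶜ ∩ {ω | σ ω ≤ t}) := fun k t =>
    le_enrichedFilt hmono _ k t _ (measurableSet_inter_le_of_sigmaAt hσ hA.compl t)
  refine ⟨isStoppingTimeE_piecewise hτ'.2.1 hτ.2.1 (hA' 0) (hAc' 0)
      (fun t => ⟨_, hτ'.1 t, rfl⟩) (fun t => ⟨_, hτ.1 t, rfl⟩),
    fun ω => ?_, fun i hi => ⟨?_, fun ω => ?_⟩⟩
  · by_cases hω : ω ∈ A <;> simp [ρ, hω, hτ.2.1 ω, hτ'.2.1 ω]
  · -- Seen from inside `A` (resp. `Aᶜ`), enlarging by `ρ` is enlarging by `τ'` (resp. `τ`).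
    refine isStoppingTimeE_piecewise (hτ'.le hi) (hτ.le hi) (hA' (i + 1)) (hAc' (i + 1))
      (fun t => comap_enrichedFilt_le _ hmono (fun j => ?_) (i + 1) t _
        ⟨_, (hτ'.2.2 i hi).1 t, rfl⟩)
      (fun t => comap_enrichedFilt_le _ hmono (fun j => ?_) (i + 1) t _
        ⟨_, (hτ.2.2 i hi).1 t, rfl⟩)
    · ext ⟨ω, hω⟩
      simp [ρ, piecewise_eq_of_mem _ _ _ hω]
    · ext ⟨ω, hω⟩
      simp [ρ, piecewise_eq_of_notMem _ _ _ hω]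
  · by_cases hω : ω ∈ A <;> simp [ρ, hω, (hτ.2.2 i hi).2 ω, (hτ'.2.2 i hi).2 ω]

end Strategies

section Gains

variable {Y : ℝ≥0 → Ω → ℝ}

lemma evalAt_nonneg (hY : ∀ t ω, 0 ≤ Y t ω) (τ : Ω → ℝ≥0∞) (ω : Ω) : 0 ≤ evalAt Y τ ω := by
  unfold evalAt
  split_ifs
  · exact hY _ ω
  · by_cases hb : IsBoundedUnder (· ≤ ·) atTop (fun t => Y t ω)
    · exact le_limsup_of_frequently_le (.of_forall fun t => hY t ω) hb
    · rw [Real.limsup_of_not_isBoundedUnder hb]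

lemma rewardSum_nonneg (hY : ∀ t ω, 0 ≤ Y t ω) (n : ℕ) (τ : ℕ → Ω → ℝ≥0∞) :
    0 ≤ rewardSum Y n τ :=
  fun ω => Finset.sum_nonneg fun i _ => evalAt_nonneg hY (τ i) ω

lemma rewardSum_piecewise (n : ℕ) (τ τ' : ℕ → Ω → ℝ≥0∞) (A : Set Ω) [DecidablePred (· ∈ A)] :
    rewardSum Y n (fun i => A.piecewise (τ' i) (τ i)) =
      A.piecewise (rewardSum Y n τ') (rewardSum Y n τ) := by
  ext ω
  by_cases hω : ω ∈ A <;> simp [rewardSum, evalAt, hω]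

lemma condExp_piecewise_setOf_le {m : MeasurableSpace Ω} {μ : Measure[m0] Ω} (hm : m ≤ m0)
    {f g : Ω → ℝ} (hf : Integrable f μ) (hg : Integrable g μ) :
    μ[{ω | μ[f | m] ω ≤ μ[g | m] ω}.piecewise g f | m] =ᵐ[μ] μ[f | m] ⊔ μ[g | m] := by
  set A := {ω | μ[f | m] ω ≤ μ[g | m] ω}
  have hA : MeasurableSet[m] A :=
    measurableSet_le stronglyMeasurable_condExp.measurable stronglyMeasurable_condExp.measurable
  have hmax : A.piecewise (μ[g | m]) (μ[f | m]) = μ[f | m] ⊔ μ[g | m] := by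
    ext ω
    by_cases hω : μ[f | m] ω ≤ μ[g | m] ω
    · simp [A, hω]
    · simp [A, hω, le_of_not_ge hω]
  rw [← hmax, ← indicator_add_compl_eq_piecewise, ← indicator_add_compl_eq_piecewise]
  exact (condExp_add (hg.indicator (hm A hA)) (hf.indicator (hm _ hA.compl)) m).trans
    ((condExp_indicator hg hA).add (condExp_indicator hf hA.compl))

variable {𝔉 : ℝ≥0 → MeasurableSpace Ω} {σ : Ω → ℝ≥0∞} {δ : ℕ → Ω → ℝ≥0∞} {n : ℕ}
  {τ τ' : ℕ → Ω → ℝ≥0∞}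

lemma exists_strategy_condExp_rewardSum_ge (μ : Measure Ω) (hmono : Monotone 𝔉)
    (hY : ∀ t ω, 0 ≤ Y t ω) (hσ : IsStoppingTimeE 𝔉 σ)
    (hτ : IsStrategy 𝔉 δ n σ τ) (hτ' : IsStrategy 𝔉 δ n σ τ') :
    ∃ ρ, IsStrategy 𝔉 δ n σ ρ ∧ range (ρ 0) ⊆ range (τ 0) ∪ range (τ' 0) ∧
      μ[rewardSum Y n τ | sigmaAt 𝔉 σ] ≤ᵐ[μ] μ[rewardSum Y n ρ | sigmaAt 𝔉 σ] ∧
      μ[rewardSum Y n τ' | sigmaAt 𝔉 σ] ≤ᵐ[μ] μ[rewardSum Y n ρ | sigmaAt 𝔉 σ] := by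
  have hpos : ∀ ρ, 0 ≤ᵐ[μ] μ[rewardSum Y n ρ | sigmaAt 𝔉 σ] := fun ρ =>
    condExp_nonneg (.of_forall (rewardSum_nonneg hY n ρ))
  by_cases hm : sigmaAt 𝔉 σ ≤ m0
  swap
  · exact ⟨τ, hτ, subset_union_left, by simp only [condExp_of_not_le hm, and_self]; exact .rfl⟩
  by_cases hint : Integrable (rewardSum Y n τ) μ
  swap
  · refine ⟨τ', hτ', subset_union_right, ?_, .rfl⟩
    rw [condExp_of_not_integrable hint]
    exact hpos τ'
  by_cases hint' : Integrable (rewardSum Y n τ') μ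
  swap
  · refine ⟨τ, hτ, subset_union_left, .rfl, ?_⟩
    rw [condExp_of_not_integrable hint']
    exact hpos τ
  set A := {ω | μ[rewardSum Y n τ | sigmaAt 𝔉 σ] ω ≤ μ[rewardSum Y n τ' | sigmaAt 𝔉 σ] ω}
  have hA : MeasurableSet[sigmaAt 𝔉 σ] A :=
    measurableSet_le stronglyMeasurable_condExp.measurable stronglyMeasurable_condExp.measurable
  have hmax := condExp_piecewise_setOf_le hm hint hint'
  rw [← rewardSum_piecewise] at hmax
  refine ⟨_, hτ.piecewise hmono hσ hτ' hA, ?_,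
    EventuallyLE.trans_eq (ae_of_all μ fun _ => le_sup_left) hmax.symm,
    EventuallyLE.trans_eq (ae_of_all μ fun _ => le_sup_right) hmax.symm⟩
  rw [range_piecewise, union_comm]
  exact union_subset_union (image_subset_range _ _) (image_subset_range _ _)

end Gains

theorem gainFam_directed_upwards_general
    (μ : Measure Ω)
    (𝔉 : ℝ≥0 → MeasurableSpace Ω) (hmono : Monotone 𝔉)
    (Y : ℝ≥0 → Ω → ℝ)
    (hYpos : ∀ t ω, 0 ≤ Y t ω)
    (n : ℕ) (δ : ℕ → Ω → ℝ≥0∞)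
    (σ : Ω → ℝ≥0∞) (hσ : IsStoppingTimeE 𝔉 σ) :
    (∀ a ∈ gainFam μ Y 𝔉 δ n σ, ∀ b ∈ gainFam μ Y 𝔉 δ n σ,
      ∃ c ∈ gainFam μ Y 𝔉 δ n σ, a ≤ᵐ[μ] c ∧ b ≤ᵐ[μ] c) ∧
    (∀ a ∈ gainFamDisc μ Y 𝔉 δ n σ, ∀ b ∈ gainFamDisc μ Y 𝔉 δ n σ,
      ∃ c ∈ gainFamDisc μ Y 𝔉 δ n σ, a ≤ᵐ[μ] c ∧ b ≤ᵐ[μ] c) := by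
  constructor
  · rintro _ ⟨τ, hτ, rfl⟩ _ ⟨τ', hτ', rfl⟩
    obtain ⟨ρ, hρ, -, hle, hle'⟩ := exists_strategy_condExp_rewardSum_ge μ hmono hYpos hσ hτ hτ'
    exact ⟨_, ⟨ρ, hρ, rfl⟩, hle, hle'⟩
  · rintro _ ⟨τ, hτ, hcount, rfl⟩ _ ⟨τ', hτ', hcount', rfl⟩
    obtain ⟨ρ, hρ, hrange, hle, hle'⟩ :=
      exists_strategy_condExp_rewardSum_ge μ hmono hYpos hσ hτ hτ'
    exact ⟨_, ⟨ρ, hρ, (hcount.union hcount').mono hrange, rfl⟩, hle, hle'⟩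

/-- The families
`{𝔼(Σ_{i=1}^n Y(τ_i) | 𝓕_σ) : τ ∈ 𝒮^n_σ(δ,𝔉)}` and
`{𝔼(Σ_{i=1}^n Y(τ_i) | 𝓕_σ) : τ ∈ 𝒮^n_σ(δ,𝔉)_disc}` are directed upwards. -/
theorem gainFam_directed_upwards
    (μ : Measure Ω) [IsProbabilityMeasure μ]
    (𝔉 : ℝ≥0 → MeasurableSpace Ω) (hle : ∀ t, 𝔉 t ≤ m0) (hmono : Monotone 𝔉)
    (hrc : RightContinuousFilt 𝔉)
    (hnull : ∀ A : Set Ω, μ A = 0 → MeasurableSet[𝔉 0] A)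
    (Y : ℝ≥0 → Ω → ℝ) (hadapt : ∀ t, Measurable[𝔉 t] (Y t))
    (hYpos : ∀ t ω, 0 ≤ Y t ω)
    (hYrc : ∀ ω t, ContinuousWithinAt (fun s => Y s ω) (Set.Ici t) t)
    (hYint : ∫⁻ ω, ⨆ t : ℝ≥0, ENNReal.ofReal (Y t ω) ∂μ < ∞)
    (n : ℕ) (hn : 2 ≤ n) (δ : ℕ → Ω → ℝ≥0∞)
    (hδfin : ∀ i, i + 1 < n → ∀ᵐ ω ∂μ, δ i ω < ∞)
    (σ : Ω → ℝ≥0∞) (hσ : IsStoppingTimeE 𝔉 σ) :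
    (∀ a ∈ gainFam μ Y 𝔉 δ n σ, ∀ b ∈ gainFam μ Y 𝔉 δ n σ,
      ∃ c ∈ gainFam μ Y 𝔉 δ n σ, a ≤ᵐ[μ] c ∧ b ≤ᵐ[μ] c) ∧
    (∀ a ∈ gainFamDisc μ Y 𝔉 δ n σ, ∀ b ∈ gainFamDisc μ Y 𝔉 δ n σ,
      ∃ c ∈ gainFamDisc μ Y 𝔉 δ n σ, a ≤ᵐ[μ] c ∧ b ≤ᵐ[μ] c) :=
  gainFam_directed_upwards_general μ 𝔉 hmono Y hYpos n δ σ hσ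

end
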